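/- Let $(\lambda_m)_{m \ge 1}$ be real numbers and $r \in (0,1)$, $\rho \in (0,1)$, $M > 0$ with $|\lambda_m^2 - \frac{r^{2m}}{4}| < \sqrt{m}\,\rho^m(1-r^2)M$ for all $m \ge 1$. Given $\epsilon > 0$, if $m_1$ satisfies $\sqrt{m}\,\rho^m(1-r^2)M < \epsilon/2$ for all $m \ge m_1$, and if $r$ is close enough to $1$ that $\frac{1}{4} - \frac{r^{2m_1}}{4} < \frac{\epsilon}{4}$ and $\frac{1-r^2}{4} < \frac{\epsilon}{4}$, then for every $\mu \in [0, 1/4]$ there exists $m \ge 1$ with $|\mu - \lambda_m^2| < \epsilon$. -/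

import Mathlib

/-! The numbers `r ^ (2 * m) / 4`, `m ≥ m₁`, decrease from above `1/4 - ε/4` towards `0` in steps
smaller than `ε/4`, so every `μ ∈ [0, 1/4]` lies within `ε/4` of one of them; the hypothesis on
`λ_m` puts `λ_m ^ 2` within `ε/2` of that same number. -/

open Filter Topology

/-- A discrete intermediate value theorem: the first term below `μ + δ` is within `δ` of `μ`. -/
theorem exists_abs_sub_lt_of_sub_succ_lt {a : ℕ → ℝ} {δ μ : ℝ}
    (hstep : ∀ n, a n - a (n + 1) < δ) (hstart : μ - δ < a 0) (hend : ∃ n, a n < μ + δ) :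
    ∃ n, |μ - a n| < δ := by
  classical
  refine ⟨Nat.find hend, abs_sub_lt_iff.mpr ⟨?_, by linarith [Nat.find_spec hend]⟩⟩
  rcases hfind : Nat.find hend with _ | k
  · linarith
  · have hprev : μ + δ ≤ a k := not_lt.mp (Nat.find_min hend (by omega))
    have hlast : a (k + 1) < μ + δ := hfind ▸ Nat.find_spec hend
    linarith [hstep k]

theorem pow_sub_pow_succ_le_one_sub {x : ℝ} (hx₀ : 0 ≤ x) (hx₁ : x ≤ 1) (k : ℕ) :
    x ^ k - x ^ (k + 1) ≤ 1 - x := by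
  have hxk : x ^ k ≤ 1 := pow_le_one₀ hx₀ hx₁
  rw [show x ^ k - x ^ (k + 1) = x ^ k * (1 - x) by ring]
  exact mul_le_of_le_one_left (by linarith) hxk

theorem squared_eigenvalues_eps_net_general
    (r ρ M ε : ℝ) (hr : r ∈ Set.Ioo (0:ℝ) 1)
    (lam : ℕ → ℝ)
    (hlam : ∀ m, 1 ≤ m → |(lam m) ^ 2 - r ^ (2 * m) / 4| < Real.sqrt (m : ℝ) * ρ ^ m * (1 - r ^ 2) * M)
    (m₁ : ℕ) (hm₁ : 1 ≤ m₁)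
    (hsmall : ∀ m ≥ m₁, Real.sqrt (m : ℝ) * ρ ^ m * (1 - r ^ 2) * M < ε / 2)
    (hr1 : 1 / 4 - r ^ (2 * m₁) / 4 < ε / 4)
    (hr2 : (1 - r ^ 2) / 4 < ε / 4) :
    ∀ μ ∈ Set.Icc (0:ℝ) (1/4), ∃ m : ℕ, 1 ≤ m ∧ |μ - (lam m) ^ 2| < ε := by
  rintro μ ⟨hμ₀, hμ₁⟩
  have hr₀ : 0 ≤ r ^ 2 := sq_nonneg r
  have hr₁ : r ^ 2 < 1 := pow_lt_one₀ hr.1.le hr.2 two_ne_zero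
  obtain ⟨n, hn⟩ : ∃ n, |μ - (r ^ 2) ^ (m₁ + n) / 4| < ε / 4 := by
    refine exists_abs_sub_lt_of_sub_succ_lt (fun k => ?_) ?_ ?_
    · rw [← add_assoc]
      linarith [pow_sub_pow_succ_le_one_sub hr₀ hr₁.le (m₁ + k)]
    · rw [add_zero, ← pow_mul]; linarith
    · have hlim : Tendsto (fun k => (r ^ 2) ^ (m₁ + k) / 4) atTop (𝓝 0) := by
        simpa [add_comm] using ((tendsto_pow_atTop_nhds_zero_of_lt_one hr₀ hr₁).comp
          (tendsto_add_atTop_nat m₁)).div_const 4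
      exact (hlim.eventually (gt_mem_nhds (by linarith))).exists
  rw [← pow_mul] at hn
  have hm : 1 ≤ m₁ + n := hm₁.trans (Nat.le_add_right _ _)
  have hlam' := (hlam _ hm).trans (hsmall _ (Nat.le_add_right _ _))
  refine ⟨m₁ + n, hm, ?_⟩
  calc |μ - lam (m₁ + n) ^ 2|
      ≤ |μ - r ^ (2 * (m₁ + n)) / 4| + |r ^ (2 * (m₁ + n)) / 4 - lam (m₁ + n) ^ 2| :=
        abs_sub_le _ _ _
    _ < ε := by rw [abs_sub_comm] at hlam'; linarith

theorem squared_eigenvalues_eps_net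
    (r ρ M ε : ℝ) (hr : r ∈ Set.Ioo (0:ℝ) 1) (hρ : ρ ∈ Set.Ioo (0:ℝ) 1)
    (hM : 0 < M) (hε : 0 < ε) (lam : ℕ → ℝ)
    (hlam : ∀ m, 1 ≤ m → |(lam m) ^ 2 - r ^ (2 * m) / 4| < Real.sqrt (m : ℝ) * ρ ^ m * (1 - r ^ 2) * M)
    (m₁ : ℕ) (hm₁ : 1 ≤ m₁)
    (hsmall : ∀ m ≥ m₁, Real.sqrt (m : ℝ) * ρ ^ m * (1 - r ^ 2) * M < ε / 2)
    (hr1 : 1 / 4 - r ^ (2 * m₁) / 4 < ε / 4)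
    (hr2 : (1 - r ^ 2) / 4 < ε / 4) :
    ∀ μ ∈ Set.Icc (0:ℝ) (1/4), ∃ m : ℕ, 1 ≤ m ∧ |μ - (lam m) ^ 2| < ε :=
  squared_eigenvalues_eps_net_general r ρ M ε hr lam hlam m₁ hm₁ hsmall hr1 hr2
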